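/- arXiv:1412.0078 — 4 statements merged into one kernel-verified Lean document; each statement's English description precedes it below -/
import Mathlib

section
/- Let (X, d) be a compact metric space, ε > 0, (E_i)_{i∈I} a finite or countable family of subsets of X each of diameter less than ε, and (c_i)_{i∈I} a family of positive real numbers. Let t > 0 and suppose F ⊆ X satisfies F ⊆ {x ∈ X : Σ_i c_i χ_{E_i}(x) > t}. Then F can be covered by at most (1/t) Σ_i c_i balls with centers in ∪_i E_i and radius 6ε. -/
open Set Metric
open scoped ENNReal

/-!
Take a maximal `ε`-separated subset `C` of `F`; it is finite because `X` is totally bounded, and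
by maximality the closed `ε`-balls around `C` cover `F`. A set of diameter `< ε` meets `C` in at most one
point, so summing the hypothesis `t < Σ_i c_i χ_{E_i}(x)` over `x ∈ C` gives `t · #C ≤ Σ_i c_i`.
-/

theorem Metric.packingNumber_ne_top_of_totallyBounded {X : Type*} [PseudoEMetricSpace X]
    {A : Set X} {ε : NNReal} (hε : ε ≠ 0) (hA : TotallyBounded A) : packingNumber ε A ≠ ⊤ := by
  obtain ⟨N, -, hN, hcover⟩ := exists_finite_isCover_of_totallyBounded (ε := ε / 2) (by simpa) hA
  refine ne_top_of_le_ne_top hN.encard_lt_top.ne ?_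
  calc packingNumber ε A = packingNumber (2 * (ε / 2)) A := by rw [mul_div_cancel₀ _ two_ne_zero]
    _ ≤ externalCoveringNumber (ε / 2) A := packingNumber_two_mul_le_externalCoveringNumber _ _
    _ ≤ N.encard := hcover.externalCoveringNumber_le_encard

theorem Metric.finite_maximalSeparatedSet {X : Type*} [PseudoEMetricSpace X] (ε : NNReal)
    (A : Set X) : (maximalSeparatedSet ε A).Finite := by
  by_cases h : packingNumber ε A = ⊤
  · simp [maximalSeparatedSet, h]
  · exact Set.encard_ne_top_iff.mp (encard_maximalSeparatedSet h ▸ h)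

theorem Metric.IsSeparated.subsingleton_inter_of_ediam_le {X : Type*} [PseudoEMetricSpace X]
    {δ : ℝ≥0∞} {S E : Set X} (hS : IsSeparated δ S) (hE : ediam E ≤ δ) :
    (S ∩ E).Subsingleton := fun x hx y hy => by
  by_contra hxy
  exact (hS hx.1 hy.1 hxy).not_ge ((edist_le_ediam_of_mem hx.2 hy.2).trans hE)

theorem mem_iUnion_of_tsum_indicator_ne_zero {ι α M : Type*} [AddCommMonoid M]
    [TopologicalSpace M] {E : ι → Set α} {f : ι → α → M} {x : α}
    (h : ∑' i, (E i).indicator (f i) x ≠ 0) : x ∈ ⋃ i, E i := by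
  contrapose! h
  simp_all [indicator_of_notMem]

theorem ENNReal.mul_card_le_tsum_of_subsingleton_inter {ι α : Type*} (S : Finset α)
    (E : ι → Set α) (w : ι → ℝ≥0∞) (t : ℝ≥0∞)
    (hS : ∀ x ∈ S, t ≤ ∑' i, (E i).indicator (fun _ => w i) x)
    (hE : ∀ i, ((S : Set α) ∩ E i).Subsingleton) :
    t * S.card ≤ ∑' i, w i := by
  classical
  have hcount : ∀ i, ∑ x ∈ S, (E i).indicator (fun _ => w i) x ≤ w i := fun i => by
    rw [Finset.sum_indicator_eq_sum_filter, Finset.sum_const]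
    refine (nsmul_le_nsmul_left zero_le (Finset.card_le_one.2 fun a ha b hb => ?_)).trans
      (one_nsmul _).le
    simp only [Finset.mem_filter] at ha hb
    exact hE i ⟨ha.1, ha.2⟩ ⟨hb.1, hb.2⟩
  calc t * S.card = ∑ _x ∈ S, t := by rw [Finset.sum_const, nsmul_eq_mul, mul_comm]
    _ ≤ ∑ x ∈ S, ∑' i, (E i).indicator (fun _ => w i) x := Finset.sum_le_sum hS
    _ = ∑' i, ∑ x ∈ S, (E i).indicator (fun _ => w i) x :=
        (Summable.tsum_finsetSum fun _ _ => ENNReal.summable).symm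
    _ ≤ ∑' i, w i := ENNReal.tsum_le_tsum hcount

theorem stmt2_general {X : Type*} [MetricSpace X] [CompactSpace X] {ι : Type*}
    (ε : ℝ) (hε : 0 < ε) (E : ι → Set X)
    (hE : ∀ i, EMetric.diam (E i) < ENNReal.ofReal ε)
    (c : ι → ℝ) (t : ℝ) (ht : 0 < t) (F : Set X)
    (hF : F ⊆ {x | ENNReal.ofReal t <
      ∑' i, (E i).indicator (fun _ => ENNReal.ofReal (c i)) x}) :
    ∃ S : Finset X, (↑S : Set X) ⊆ (⋃ i, E i) ∧
      F ⊆ ⋃ y ∈ S, Metric.ball y (6 * ε) ∧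
      (S.card : ℝ≥0∞) ≤ ENNReal.ofReal t⁻¹ * ∑' i, ENNReal.ofReal (c i) := by
  have hpack : packingNumber ε.toNNReal F ≠ ⊤ :=
    packingNumber_ne_top_of_totallyBounded (by simpa using hε)
      (isCompact_univ.totallyBounded.subset (subset_univ F))
  set C := maximalSeparatedSet ε.toNNReal F
  have hCF : C ⊆ F := maximalSeparatedSet_subset
  have hC : C.Finite := finite_maximalSeparatedSet _ F
  refine ⟨hC.toFinset, ?_, ?_, ?_⟩
  · intro x hx
    rw [Finite.coe_toFinset] at hx
    have hxF : ENNReal.ofReal t < _ := hF (hCF hx)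
    exact mem_iUnion_of_tsum_indicator_ne_zero (pos_of_gt hxF).ne'
  · intro x hx
    obtain ⟨y, hyC, hxy⟩ := isCover_maximalSeparatedSet hpack hx
    refine mem_iUnion₂.2 ⟨y, by simpa using hyC, ?_⟩
    have hdist : dist x y ≤ ε := (edist_le_ofReal hε.le).1 hxy
    rw [mem_ball]
    linarith
  · rw [ENNReal.ofReal_inv_of_pos ht, ← ENNReal.mul_le_iff_le_inv (by simpa using ht)
      ENNReal.ofReal_ne_top]
    refine ENNReal.mul_card_le_tsum_of_subsingleton_inter _ E _ _
      (fun x hx => (hF (hCF (by simpa using hx))).le) fun i => ?_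
    rw [Finite.coe_toFinset]
    exact isSeparated_maximalSeparatedSet.subsingleton_inter_of_ediam_le (hE i).le

/-- Lemma 3.4 (covering lemma): let `(X,d)` be a compact metric space, `ε > 0`,
`(E_i)_{i∈I}` a finite or countable family of subsets of `X` of diameter less than `ε`, and
`(c_i)` positive numbers.  If `t > 0` and `F ⊆ {x : Σ_i c_i χ_{E_i}(x) > t}`, then `F` can be
covered by no more than `(1/t) Σ_i c_i` balls with centers in `⋃_i E_i` and radius `6ε`. -/
theorem stmt2 {X : Type*} [MetricSpace X] [CompactSpace X] {ι : Type*} [Countable ι]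
    (ε : ℝ) (hε : 0 < ε) (E : ι → Set X)
    (hE : ∀ i, EMetric.diam (E i) < ENNReal.ofReal ε)
    (c : ι → ℝ) (hc : ∀ i, 0 < c i) (t : ℝ) (ht : 0 < t) (F : Set X)
    (hF : F ⊆ {x | ENNReal.ofReal t <
      ∑' i, (E i).indicator (fun _ => ENNReal.ofReal (c i)) x}) :
    ∃ S : Finset X, (↑S : Set X) ⊆ (⋃ i, E i) ∧
      F ⊆ ⋃ y ∈ S, Metric.ball y (6 * ε) ∧
      (S.card : ℝ≥0∞) ≤ ENNReal.ofReal t⁻¹ * ∑' i, ENNReal.ofReal (c i) :=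
  stmt2_general ε hε E hE c t ht F hF
end

section
/- Let (X, T) be a topological dynamical system and μ a Borel probability measure on X. Let α be a finite Borel partition of X with cardinality M. Define h(n) = H_{ν_n}(α) where ν_n = (1/n) Σ_{i=0}^{n-1} μ ∘ T^{-i}. Then for all n ∈ ℕ, |h(n+1) − h(n)| ≤ (1/(n+1)) log(3 M² (n+1)). -/
open MeasureTheory
open scoped ENNReal

/-- Shannon entropy of the (at most countable) Borel partition of `X` given by the fibers of
`P : X → ι`, with respect to the measure `μ`:  `H_μ(P) = Σ_i −μ(P⁻¹{i}) log μ(P⁻¹{i})`. -/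
noncomputable def partEnt {X ι : Type*} [MeasurableSpace X] (μ : Measure X) (P : X → ι) : ℝ :=
  ∑' i : ι, Real.negMulLog ((μ (P ⁻¹' {i})).toReal)

/-- The averaged measure `(1/n) Σ_{i=a}^{a+n-1} μ ∘ T^{-i}`. -/
noncomputable def avgMeasure {X : Type*} [MeasurableSpace X] (μ : Measure X) (T : X → X)
    (a n : ℕ) : Measure X :=
  (n : ℝ≥0∞)⁻¹ • ∑ i ∈ Finset.range n, Measure.map (T^[a + i]) μ

/-!
With `p = 1/(n+1)` one has `ν_{n+1} = (1 - p) ν_n + p (μ ∘ T^{-n})`. Entropy is concave in the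
measure, and subadditivity of `negMulLog` shows it is also convex up to the binary entropy
`-p log p - (1-p) log (1-p)`. As both entropies lie in `[0, log M]`, the change is at most
`p log M - p log p - (1-p) log (1-p) ≤ p (log M + log (n+1) + 1)`.
-/

namespace Real

open Finset

lemma negMulLog_add_le {s t : ℝ} (hs : 0 ≤ s) (ht : 0 ≤ t) :
    negMulLog (s + t) ≤ negMulLog s + negMulLog t := by
  have log_le : ∀ {a b : ℝ}, 0 ≤ a → 0 ≤ b → a * log a ≤ a * log (a + b) := by
    intro a b ha hb
    rcases ha.eq_or_lt with rfl | ha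
    · simp
    · exact mul_le_mul_of_nonneg_left (log_le_log ha (by linarith)) ha.le
  have h₁ := log_le hs ht
  have h₂ := log_le ht hs
  rw [add_comm t s] at h₂
  simp only [negMulLog]
  linarith

lemma negMulLog_mul_add_mul_le {a b x y : ℝ} (ha : 0 ≤ a) (hb : 0 ≤ b) (hx : 0 ≤ x)
    (hy : 0 ≤ y) :
    negMulLog (a * x + b * y) ≤
      a * negMulLog x + b * negMulLog y + x * negMulLog a + y * negMulLog b := by
  have h := negMulLog_add_le (mul_nonneg ha hx) (mul_nonneg hb hy)
  rw [negMulLog_mul, negMulLog_mul] at h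
  linarith

variable {ι : Type*} [Fintype ι] {x y : ι → ℝ}

lemma sum_negMulLog_nonneg (hx : ∀ i, 0 ≤ x i) (hx₁ : ∑ i, x i = 1) :
    0 ≤ ∑ i, negMulLog (x i) :=
  sum_nonneg fun i _ ↦ negMulLog_nonneg (hx i)
    (hx₁ ▸ single_le_sum (fun j _ ↦ hx j) (mem_univ i))

lemma sum_negMulLog_le_log_card (hx : ∀ i, 0 ≤ x i) (hx₁ : ∑ i, x i = 1) :
    ∑ i, negMulLog (x i) ≤ log (Fintype.card ι) := by
  have hcard : (0 : ℝ) < Fintype.card ι := by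
    have : Nonempty ι := by
      by_contra h
      simp [not_nonempty_iff.mp h] at hx₁
    exact_mod_cast Fintype.card_pos
  set w : ℝ := (Fintype.card ι : ℝ)⁻¹
  have jensen := concaveOn_negMulLog.le_map_sum (t := univ) (w := fun _ ↦ w) (p := x)
    (fun _ _ ↦ by positivity) (by simp [w, hcard.ne']) (fun i _ ↦ Set.mem_Ici.2 (hx i))
  simp only [smul_eq_mul, ← mul_sum, hx₁, mul_one] at jensen
  have hw : negMulLog w = w * log (Fintype.card ι) := by simp [w, negMulLog, log_inv]
  rw [hw] at jensen
  exact le_of_mul_le_mul_left jensen (by positivity)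

lemma abs_sum_negMulLog_mix_sub_le {p : ℝ} (hp₀ : 0 ≤ p) (hp₁ : p ≤ 1)
    (hx : ∀ i, 0 ≤ x i) (hy : ∀ i, 0 ≤ y i) (hx₁ : ∑ i, x i = 1) (hy₁ : ∑ i, y i = 1) :
    |∑ i, negMulLog ((1 - p) * x i + p * y i) - ∑ i, negMulLog (x i)| ≤
      p * log (Fintype.card ι) + negMulLog (1 - p) + negMulLog p := by
  have hq₀ : 0 ≤ 1 - p := by linarith
  have concave : (1 - p) * ∑ i, negMulLog (x i) + p * ∑ i, negMulLog (y i) ≤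
      ∑ i, negMulLog ((1 - p) * x i + p * y i) := by
    rw [mul_sum, mul_sum, ← sum_add_distrib]
    refine sum_le_sum fun i _ ↦ ?_
    simpa using concaveOn_negMulLog.2 (Set.mem_Ici.2 (hx i)) (Set.mem_Ici.2 (hy i)) hq₀ hp₀
      (by ring)
  have mixing : ∑ i, negMulLog ((1 - p) * x i + p * y i) ≤
      (1 - p) * ∑ i, negMulLog (x i) + p * ∑ i, negMulLog (y i) +
        negMulLog (1 - p) + negMulLog p := by
    calc ∑ i, negMulLog ((1 - p) * x i + p * y i)
        ≤ ∑ i, ((1 - p) * negMulLog (x i) + p * negMulLog (y i) +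
            x i * negMulLog (1 - p) + y i * negMulLog p) :=
          sum_le_sum fun i _ ↦ negMulLog_mul_add_mul_le hq₀ hp₀ (hx i) (hy i)
      _ = _ := by simp only [sum_add_distrib, ← mul_sum, ← sum_mul, hx₁, hy₁]; ring
  have hq := negMulLog_nonneg hq₀ (by linarith : 1 - p ≤ 1)
  have hp := negMulLog_nonneg hp₀ hp₁
  rw [abs_le]
  constructor
  · linarith [mul_nonneg hp₀ (sum_negMulLog_nonneg hy hy₁),
      mul_le_mul_of_nonneg_left (sum_negMulLog_le_log_card hx hx₁) hp₀]
  · linarith [mul_nonneg hp₀ (sum_negMulLog_nonneg hx hx₁),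
      mul_le_mul_of_nonneg_left (sum_negMulLog_le_log_card hy hy₁) hp₀]

end Real

section avgMeasure

variable {X : Type*} [MeasurableSpace X] (μ : Measure X) (T : X → X)

lemma avgMeasure_apply_toReal [IsFiniteMeasure μ] (a n : ℕ) (s : Set X) :
    (avgMeasure μ T a n s).toReal =
      (n : ℝ)⁻¹ * ∑ i ∈ Finset.range n, (μ.map T^[a + i] s).toReal := by
  simp [avgMeasure, ENNReal.toReal_sum, measure_ne_top]

lemma avgMeasure_succ_apply_toReal [IsFiniteMeasure μ] (a n : ℕ) (s : Set X) :
    (avgMeasure μ T a (n + 1) s).toReal =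
      (1 - (n + 1 : ℝ)⁻¹) * (avgMeasure μ T a n s).toReal +
        (n + 1 : ℝ)⁻¹ * (μ.map T^[a + n] s).toReal := by
  rw [avgMeasure_apply_toReal, avgMeasure_apply_toReal, Finset.sum_range_succ]
  rcases n.eq_zero_or_pos with rfl | hn
  · simp
  · have : (0 : ℝ) < n := by exact_mod_cast hn
    push_cast
    field_simp
    ring

lemma isProbabilityMeasure_avgMeasure (hT : Measurable T) [IsProbabilityMeasure μ] (a : ℕ)
    {n : ℕ} (hn : n ≠ 0) : IsProbabilityMeasure (avgMeasure μ T a n) := by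
  constructor
  have : ∀ i, μ.map T^[a + i] Set.univ = 1 := fun i ↦ by
    rw [Measure.map_apply (hT.iterate _) MeasurableSet.univ, Set.preimage_univ, measure_univ]
  simp [avgMeasure, this, ENNReal.inv_mul_cancel, hn]

end avgMeasure

section partEnt

variable {X ι : Type*} [MeasurableSpace X] [Fintype ι] (ν : Measure X) (P : X → ι)

lemma partEnt_eq_sum : partEnt ν P = ∑ i, Real.negMulLog (ν (P ⁻¹' {i})).toReal :=
  tsum_fintype _

lemma sum_toReal_measure_preimage_singleton [IsProbabilityMeasure ν]
    (hP : ∀ i, MeasurableSet (P ⁻¹' {i})) :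
    ∑ i, (ν (P ⁻¹' {i})).toReal = 1 := by
  simpa [measureReal_def] using
    sum_measureReal_preimage_singleton (μ := ν) Finset.univ (fun i _ ↦ hP i)

end partEnt

theorem stmt3_general {X : Type*} [MetricSpace X] [MeasurableSpace X] [BorelSpace X]
    (T : X → X) (hT : Continuous T)
    (μ : Measure X) [IsProbabilityMeasure μ]
    (M : ℕ) (P : X → Fin M) (hP : ∀ i, MeasurableSet (P ⁻¹' {i}))
    (n : ℕ) (hn : 1 ≤ n) :
    |partEnt (avgMeasure μ T 0 (n + 1)) P - partEnt (avgMeasure μ T 0 n) P| ≤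
      (1 / (n + 1 : ℝ)) * Real.log (3 * M ^ 2 * (n + 1)) := by
  have hM : 0 < M := (P (nonempty_of_isProbabilityMeasure μ).some).pos
  have := isProbabilityMeasure_avgMeasure μ T hT.measurable 0 (Nat.one_le_iff_ne_zero.mp hn)
  have := Measure.isProbabilityMeasure_map (μ := μ) (hT.measurable.iterate n).aemeasurable
  set p : ℝ := (n + 1 : ℝ)⁻¹
  have hp₀ : 0 ≤ p := by positivity
  have hp₁ : p ≤ 1 := inv_le_one_of_one_le₀ (by linarith [n.cast_nonneg (α := ℝ)])
  have mix := Real.abs_sum_negMulLog_mix_sub_le hp₀ hp₁ (fun _ ↦ ENNReal.toReal_nonneg)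
    (fun _ ↦ ENNReal.toReal_nonneg)
    (sum_toReal_measure_preimage_singleton (avgMeasure μ T 0 n) P hP)
    (sum_toReal_measure_preimage_singleton (μ.map T^[n]) P hP)
  rw [Fintype.card_fin] at mix
  have hq : Real.negMulLog (1 - p) ≤ p * Real.log 3 := by
    have log_three : 1 ≤ Real.log 3 := (lt_trans (by norm_num) Real.log_three_gt_d9).le
    calc Real.negMulLog (1 - p) ≤ 1 - (1 - p) := Real.negMulLog_le_one_sub_self (by linarith)
      _ = p := by ring
      _ ≤ p * Real.log 3 := le_mul_of_one_le_right hp₀ log_three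
  have hp : Real.negMulLog p = p * Real.log (n + 1) := by simp [p, Real.negMulLog, Real.log_inv]
  have hlog : Real.log (3 * M ^ 2 * (n + 1)) = Real.log 3 + 2 * Real.log M + Real.log (n + 1) := by
    rw [Real.log_mul (by positivity) (by positivity), Real.log_mul (by positivity) (by positivity),
      Real.log_pow]
    push_cast
    ring
  rw [partEnt_eq_sum, partEnt_eq_sum, one_div, hlog]
  simp_rw [avgMeasure_succ_apply_toReal, zero_add]
  refine mix.trans ?_
  linarith [mul_nonneg hp₀ (Real.log_natCast_nonneg M)]

/-- Lemma 5.1(ii): for a TDS `(X,T)`, a Borel probability measure `μ` and a finite Borel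
partition `α` of cardinality `M` (fibers of `P : X → Fin M`), writing
`h(n) = H_{(1/n)Σ_{i<n} μ∘T^{-i}}(α)`, one has
`|h(n+1) − h(n)| ≤ (1/(n+1)) log (3 M² (n+1))` for all `n ∈ ℕ`. -/
theorem stmt3 {X : Type*} [MetricSpace X] [CompactSpace X] [MeasurableSpace X] [BorelSpace X]
    (T : X → X) (hT : Continuous T)
    (μ : Measure X) [IsProbabilityMeasure μ]
    (M : ℕ) (P : X → Fin M) (hP : ∀ i, MeasurableSet (P ⁻¹' {i}))
    (n : ℕ) (hn : 1 ≤ n) :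
    |partEnt (avgMeasure μ T 0 (n + 1)) P - partEnt (avgMeasure μ T 0 n) P| ≤
      (1 / (n + 1 : ℝ)) * Real.log (3 * M ^ 2 * (n + 1)) :=
  stmt3_general T hT μ M P hP n hn
end

section
/- Let p ∈ ℕ and let u_j : ℕ → ℝ (j = 1,…,p) be bounded functions satisfying lim_{n→∞} |u_j(n+1) − u_j(n)| = 0 for each j. Then for any positive real numbers c_1,…,c_p and r_1,…,r_p, limsup_{n→∞} Σ_{j=1}^p (u_j(⌈c_j n⌉) − u_j(⌈r_j n⌉)) ≥ 0. -/
open Filter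

open MeasureTheory

/-- Telescoping: bounded steps give small displacement over bounded gaps. -/
lemma kp_tele (u : ℕ → ℝ) (hdiff : Tendsto (fun n => |u (n + 1) - u n|) atTop (nhds 0))
    {δ : ℝ} (hδ : 0 < δ) (K : ℕ) :
    ∃ M : ℕ, ∀ m ≥ M, ∀ k ≤ K, |u (m + k) - u m| ≤ δ := by
  have hδ' : 0 < δ / (K + 1) := by positivity
  obtain ⟨M, hM⟩ := Metric.tendsto_atTop.mp hdiff (δ / (K + 1)) hδ'
  refine ⟨M, fun m hm k hk => ?_⟩
  have key : ∀ k : ℕ, |u (m + k) - u m| ≤ k * (δ / (K + 1)) := by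
    intro k
    induction k with
    | zero => simp
    | succ k ih =>
      have h1 := hM (m + k) (le_trans hm (Nat.le_add_right _ _))
      rw [Real.dist_eq, sub_zero, abs_abs] at h1
      have : u (m + (k + 1)) - u m = (u (m + k + 1) - u (m + k)) + (u (m + k) - u m) := by
        ring_nf
      rw [this]
      calc |(u (m + k + 1) - u (m + k)) + (u (m + k) - u m)|
          ≤ |u (m + k + 1) - u (m + k)| + |u (m + k) - u m| := abs_add_le _ _
        _ ≤ δ / (K + 1) + k * (δ / (K + 1)) := add_le_add h1.le ih
        _ = ((k:ℝ) + 1) * (δ / (K + 1)) := by ring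
        _ = ((k + 1 : ℕ) : ℝ) * (δ / (K + 1)) := by push_cast; ring
  calc |u (m + k) - u m| ≤ k * (δ / (K + 1)) := key k
    _ ≤ (K + 1) * (δ / (K + 1)) := by
        apply mul_le_mul_of_nonneg_right _ hδ'.le
        exact_mod_cast Nat.le_succ_of_le hk
    _ = δ := by field_simp

lemma kp_meas (u : ℕ → ℝ) : Measurable (fun t : ℝ => u ⌈Real.exp t⌉₊) :=
  (Measurable.of_discrete (f := u)).comp (Nat.measurable_ceil.comp Real.measurable_exp)

lemma kp_int (u : ℕ → ℝ) {C : ℝ} (hC : ∀ n, |u n| ≤ C) (x y : ℝ) :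
    IntervalIntegrable (fun t : ℝ => u ⌈Real.exp t⌉₊) volume x y := by
  refine IntervalIntegrable.mono_fun (f := fun _ : ℝ => C) intervalIntegrable_const
    ((kp_meas u).aestronglyMeasurable.restrict) ?_
  refine Eventually.of_forall fun t => ?_
  simp only [Real.norm_eq_abs]
  exact (hC _).trans (le_abs_self C)

lemma kp_int' {h : ℝ → ℝ} (hm : Measurable h) {C : ℝ} (hC : ∀ t, |h t| ≤ C) (x y : ℝ) :
    IntervalIntegrable h volume x y := by
  refine IntervalIntegrable.mono_fun (f := fun _ : ℝ => C) intervalIntegrable_const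
    (hm.aestronglyMeasurable.restrict) ?_
  exact Eventually.of_forall fun t => by
    simpa [Real.norm_eq_abs] using (hC t).trans (le_abs_self C)

/-- The key integral telescoping bound. -/
lemma kp_shift (u : ℕ → ℝ) {C : ℝ} (hC : ∀ n, |u n| ≤ C) (a b T S : ℝ) :
    |∫ t in T..(T + S), (u ⌈Real.exp (t + a)⌉₊ - u ⌈Real.exp (t + b)⌉₊)| ≤ 2 * (C * |a - b|) := by
  set g : ℝ → ℝ := fun t => u ⌈Real.exp t⌉₊ with hg
  have hgm : Measurable g := kp_meas u
  have hgb : ∀ t, |g t| ≤ C := fun t => hC _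
  have hint : ∀ x y : ℝ, IntervalIntegrable g volume x y := kp_int' hgm hgb
  have hinta : ∀ e x y : ℝ, IntervalIntegrable (fun t => g (t + e)) volume x y :=
    fun e x y => kp_int' (hgm.comp (measurable_add_const e)) (fun t => hgb _) x y
  have hsplit : (∫ t in T..(T + S), (g (t + a) - g (t + b)))
      = (∫ t in (T + a)..(T + S + a), g t) - (∫ t in (T + b)..(T + S + b), g t) := by
    rw [intervalIntegral.integral_sub (hinta a T (T + S)) (hinta b T (T + S)),
      intervalIntegral.integral_comp_add_right, intervalIntegral.integral_comp_add_right]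
  have h1 := intervalIntegral.integral_add_adjacent_intervals
    (hint (T + b) (T + S + b)) (hint (T + S + b) (T + S + a))
  have h2 := intervalIntegral.integral_add_adjacent_intervals
    (hint (T + b) (T + a)) (hint (T + a) (T + S + a))
  have hD : (∫ t in T..(T + S), (g (t + a) - g (t + b)))
      = (∫ t in (T + S + b)..(T + S + a), g t) - (∫ t in (T + b)..(T + a), g t) := by
    rw [hsplit]; linarith
  rw [hD]
  have e1 : |∫ t in (T + S + b)..(T + S + a), g t| ≤ C * |a - b| := by
    have := intervalIntegral.norm_integral_le_of_norm_le_const (a := T + S + b) (b := T + S + a)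
      (C := C) (f := g) (fun x _ => by simpa [Real.norm_eq_abs] using hgb x)
    simpa [Real.norm_eq_abs, show T + S + a - (T + S + b) = a - b by ring] using this
  have e2 : |∫ t in (T + b)..(T + a), g t| ≤ C * |a - b| := by
    have := intervalIntegral.norm_integral_le_of_norm_le_const (a := T + b) (b := T + a)
      (C := C) (f := g) (fun x _ => by simpa [Real.norm_eq_abs] using hgb x)
    simpa [Real.norm_eq_abs, show T + a - (T + b) = a - b by ring] using this
  calc |(∫ t in (T + S + b)..(T + S + a), g t) - (∫ t in (T + b)..(T + a), g t)|
      ≤ |∫ t in (T + S + b)..(T + S + a), g t| + |∫ t in (T + b)..(T + a), g t| := abs_sub _ _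
    _ ≤ 2 * (C * |a - b|) := by linarith

set_option maxHeartbeats 1000000 in
/-- Combinatorial lemma of Kenyon–Peres (Lemma 5.4 / \cite[Lemma 4.1]{KePe96}):
if `u_1, …, u_p : ℕ → ℝ` are bounded with `|u_j(n+1) - u_j(n)| → 0`, then for any positive
reals `c_j, r_j`, `limsup_n Σ_j (u_j(⌈c_j n⌉) - u_j(⌈r_j n⌉)) ≥ 0`. -/
theorem stmt6 (p : ℕ) (u : Fin p → ℕ → ℝ)
    (hbdd : ∀ j, ∃ C : ℝ, ∀ n, |u j n| ≤ C)
    (hdiff : ∀ j, Tendsto (fun n => |u j (n + 1) - u j n|) atTop (nhds 0))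
    (c r : Fin p → ℝ) (hc : ∀ j, 0 < c j) (hr : ∀ j, 0 < r j) :
    0 ≤ limsup (fun n : ℕ => ∑ j, (u j ⌈c j * n⌉₊ - u j ⌈r j * n⌉₊)) atTop := by
  by_contra hneg
  push_neg at hneg
  choose C hC using hbdd
  have hC0 : ∀ j, 0 ≤ C j := fun j => (abs_nonneg _).trans (hC j 0)
  set f : ℕ → ℝ := fun n => ∑ j, (u j ⌈c j * n⌉₊ - u j ⌈r j * n⌉₊) with hfdef
  -- f is bounded above
  have hbd : IsBoundedUnder (· ≤ ·) atTop f := by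
    refine isBoundedUnder_of ⟨∑ j, 2 * C j, fun n => ?_⟩
    refine Finset.sum_le_sum fun j _ => ?_
    have h1 := abs_le.1 (hC j ⌈c j * n⌉₊)
    have h2 := abs_le.1 (hC j ⌈r j * n⌉₊)
    linarith [h1.1, h1.2, h2.1, h2.2]
  set ε : ℝ := -(limsup f atTop) / 2 with hεdef
  have hε : 0 < ε := by simp only [hεdef]; linarith
  have hlt : limsup f atTop < -ε := by simp only [hεdef]; linarith
  have hevf : ∀ᶠ n : ℕ in atTop, f n < -ε := eventually_lt_of_limsup_lt hlt hbd
  set δ : ℝ := ε / (4 * (p + 1)) with hδdef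
  have hδ : 0 < δ := by positivity
  choose M hM using fun j => kp_tele (u j) (hdiff j) hδ (max ⌈c j⌉₊ ⌈r j⌉₊)
  -- find N where everything holds
  have hev : ∀ᶠ n : ℕ in atTop,
      f n < -ε ∧ ∀ j, (M j : ℝ) ≤ c j * n ∧ (M j : ℝ) ≤ r j * n := by
    refine hevf.and (eventually_all.2 fun j => ?_)
    have t1 : Tendsto (fun n : ℕ => c j * n) atTop atTop :=
      Tendsto.const_mul_atTop (hc j) tendsto_natCast_atTop_atTop
    have t2 : Tendsto (fun n : ℕ => r j * n) atTop atTop :=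
      Tendsto.const_mul_atTop (hr j) tendsto_natCast_atTop_atTop
    exact (t1.eventually_ge_atTop _).and (t2.eventually_ge_atTop _)
  obtain ⟨N, hN⟩ := eventually_atTop.1 hev
  set g : Fin p → ℝ → ℝ := fun j t => u j ⌈Real.exp t⌉₊ with hgdef
  set G : ℝ → ℝ := fun t => ∑ j, (g j (t + Real.log (c j)) - g j (t + Real.log (r j)))
    with hGdef
  set T : ℝ := Real.log (N + 1) with hTdef
  -- Step 1: G t ≤ -ε/2 for t ≥ T
  have hGsmall : ∀ t ≥ T, G t ≤ -ε / 2 := by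
    intro t ht
    set x : ℝ := Real.exp t with hxdef
    set n : ℕ := ⌊x⌋₊ with hndef
    have hxN : (N : ℝ) + 1 ≤ x := by
      rw [hxdef, ← Real.exp_log (show (0:ℝ) < N + 1 by positivity)]
      exact Real.exp_le_exp.2 ht
    have hnN : N ≤ n := Nat.le_floor (by linarith)
    have hx1 : (n : ℝ) ≤ x := Nat.floor_le (Real.exp_pos t).le
    have hx2 : x < n + 1 := Nat.lt_floor_add_one x
    obtain ⟨hfn, hMn⟩ := hN n hnN
    have key : ∀ (j : Fin p) (d : ℝ), 0 < d → (M j : ℝ) ≤ d * n →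
        ⌈d⌉₊ ≤ max ⌈c j⌉₊ ⌈r j⌉₊ → |u j ⌈d * x⌉₊ - u j ⌈d * n⌉₊| ≤ δ := by
      intro j d hd hMd hKd
      set m1 : ℕ := ⌈d * n⌉₊ with hm1
      set m2 : ℕ := ⌈d * x⌉₊ with hm2
      have hle : m1 ≤ m2 := Nat.ceil_le_ceil (mul_le_mul_of_nonneg_left hx1 hd.le)
      have hgap : m2 ≤ m1 + ⌈d⌉₊ := by
        rw [hm2, Nat.ceil_le]
        push_cast
        calc d * x ≤ d * (n + 1) := by nlinarith
          _ = d * n + d := by ring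
          _ ≤ (m1 : ℝ) + (⌈d⌉₊ : ℝ) := add_le_add (Nat.le_ceil _) (Nat.le_ceil _)
      have hMm1 : M j ≤ m1 := by
        have : (M j : ℝ) ≤ (m1 : ℝ) := hMd.trans (Nat.le_ceil _)
        exact_mod_cast this
      have hk : m2 - m1 ≤ max ⌈c j⌉₊ ⌈r j⌉₊ := le_trans (by omega) hKd
      have := hM j m1 hMm1 (m2 - m1) hk
      rwa [Nat.add_sub_cancel' hle] at this
    have hcx : ∀ j : Fin p, g j (t + Real.log (c j)) = u j ⌈c j * x⌉₊ := by
      intro j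
      simp only [hgdef]
      rw [Real.exp_add, Real.exp_log (hc j), mul_comm]
    have hrx : ∀ j : Fin p, g j (t + Real.log (r j)) = u j ⌈r j * x⌉₊ := by
      intro j
      simp only [hgdef]
      rw [Real.exp_add, Real.exp_log (hr j), mul_comm]
    have hdiffGf : |G t - f n| ≤ ε / 2 := by
      have hsum : G t - f n = ∑ j, ((u j ⌈c j * x⌉₊ - u j ⌈c j * n⌉₊)
          - (u j ⌈r j * x⌉₊ - u j ⌈r j * n⌉₊)) := by
        rw [hGdef, hfdef, ← Finset.sum_sub_distrib]
        refine Finset.sum_congr rfl fun j _ => ?_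
        rw [hcx j, hrx j]; ring
      rw [hsum]
      have hbound : ∀ j : Fin p, |(u j ⌈c j * x⌉₊ - u j ⌈c j * n⌉₊)
          - (u j ⌈r j * x⌉₊ - u j ⌈r j * n⌉₊)| ≤ 2 * δ := by
        intro j
        have k1 := key j (c j) (hc j) (hMn j).1 (le_max_left _ _)
        have k2 := key j (r j) (hr j) (hMn j).2 (le_max_right _ _)
        calc |(u j ⌈c j * x⌉₊ - u j ⌈c j * n⌉₊) - (u j ⌈r j * x⌉₊ - u j ⌈r j * n⌉₊)|
            ≤ |u j ⌈c j * x⌉₊ - u j ⌈c j * n⌉₊| + |u j ⌈r j * x⌉₊ - u j ⌈r j * n⌉₊| :=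
              abs_sub _ _
          _ ≤ 2 * δ := by linarith
      calc |∑ j, ((u j ⌈c j * x⌉₊ - u j ⌈c j * n⌉₊) - (u j ⌈r j * x⌉₊ - u j ⌈r j * n⌉₊))|
          ≤ ∑ j, |(u j ⌈c j * x⌉₊ - u j ⌈c j * n⌉₊) - (u j ⌈r j * x⌉₊ - u j ⌈r j * n⌉₊)| :=
            Finset.abs_sum_le_sum_abs _ _
        _ ≤ ∑ _j : Fin p, (2 * δ) := Finset.sum_le_sum fun j _ => hbound j
        _ = p * (2 * δ) := by
            rw [Finset.sum_const, Finset.card_univ, Fintype.card_fin, nsmul_eq_mul]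
        _ ≤ ((p : ℝ) + 1) * (2 * δ) := by
            have hp : (p : ℝ) ≤ (p : ℝ) + 1 := by linarith
            exact mul_le_mul_of_nonneg_right hp (by positivity)
        _ = ε / 2 := by
            rw [hδdef]
            have hp1 : ((p : ℝ) + 1) ≠ 0 := by positivity
            field_simp
            ring
    have habs := abs_le.1 hdiffGf
    linarith [habs.1, habs.2]
  -- Step 2: integral bounds give contradiction
  set K : ℝ := ∑ j, 2 * (C j * |Real.log (c j) - Real.log (r j)|) with hKdef
  have hK0 : 0 ≤ K := Finset.sum_nonneg fun j _ => by
    have := hC0 j; positivity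
  set S : ℝ := 2 * (K + 1) / ε with hSdef
  have hS : 0 < S := by positivity
  have hintj : ∀ (j : Fin p) (x y : ℝ), IntervalIntegrable
      (fun t => g j (t + Real.log (c j)) - g j (t + Real.log (r j))) volume x y := by
    intro j x y
    have hm : Measurable (fun t : ℝ => g j (t + Real.log (c j)) - g j (t + Real.log (r j))) :=
      ((kp_meas (u j)).comp (measurable_add_const _)).sub
        ((kp_meas (u j)).comp (measurable_add_const _))
    refine kp_int' hm (C := 2 * C j) (fun t => ?_) x y
    have b1 : |g j (t + Real.log (c j))| ≤ C j := hC j _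
    have b2 : |g j (t + Real.log (r j))| ≤ C j := hC j _
    calc |g j (t + Real.log (c j)) - g j (t + Real.log (r j))|
        ≤ |g j (t + Real.log (c j))| + |g j (t + Real.log (r j))| := abs_sub _ _
      _ ≤ 2 * C j := by linarith
  have hGm : Measurable G := by
    rw [hGdef]
    exact Finset.measurable_sum _ fun j _ =>
      ((kp_meas (u j)).comp (measurable_add_const _)).sub
        ((kp_meas (u j)).comp (measurable_add_const _))
  have hGb : ∀ t, |G t| ≤ ∑ j, 2 * C j := by
    intro t
    calc |G t| ≤ ∑ j, |g j (t + Real.log (c j)) - g j (t + Real.log (r j))| :=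
          Finset.abs_sum_le_sum_abs _ _
      _ ≤ ∑ j, 2 * C j := by
          refine Finset.sum_le_sum fun j _ => ?_
          have b1 : |g j (t + Real.log (c j))| ≤ C j := hC j _
          have b2 : |g j (t + Real.log (r j))| ≤ C j := hC j _
          calc |g j (t + Real.log (c j)) - g j (t + Real.log (r j))|
              ≤ |g j (t + Real.log (c j))| + |g j (t + Real.log (r j))| := abs_sub _ _
            _ ≤ 2 * C j := by linarith
  have hintG : IntervalIntegrable G volume T (T + S) := kp_int' hGm hGb T (T + S)
  have hupper : (∫ t in T..(T + S), G t) ≤ S * (-ε / 2) := by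
    have hmono := intervalIntegral.integral_mono_on (μ := volume)
      (show T ≤ T + S by linarith) hintG (intervalIntegrable_const (c := -ε / 2))
      (fun t ht => hGsmall t ht.1)
    rw [intervalIntegral.integral_const, smul_eq_mul, add_sub_cancel_left] at hmono
    exact hmono
  have hsumint : (∫ t in T..(T + S), G t)
      = ∑ j, ∫ t in T..(T + S), (g j (t + Real.log (c j)) - g j (t + Real.log (r j))) := by
    rw [hGdef]
    exact intervalIntegral.integral_finset_sum (fun j _ => hintj j T (T + S))
  have hlower : -K ≤ ∫ t in T..(T + S), G t := by
    rw [hsumint, hKdef, ← Finset.sum_neg_distrib]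
    refine Finset.sum_le_sum fun j _ => ?_
    have hks : |∫ t in T..(T + S),
        (g j (t + Real.log (c j)) - g j (t + Real.log (r j)))|
        ≤ 2 * (C j * |Real.log (c j) - Real.log (r j)|) :=
      kp_shift (u j) (hC j) (Real.log (c j)) (Real.log (r j)) T S
    have hna := neg_abs_le (∫ t in T..(T + S),
        (g j (t + Real.log (c j)) - g j (t + Real.log (r j))))
    linarith
  have hcompute : S * (-ε / 2) = -(K + 1) := by
    rw [hSdef]
    field_simp
  linarith
end

section
/- Let ν be a Borel probability measure on a compact metric space X, T : X → X continuous, M ∈ ℕ, and ξ = {A₁,…,A_j} a Borel partition of X with j ≤ M. Then for any positive integers n, ℓ with n ≥ 2ℓ: (1/n) H_ν(⋁_{i=0}^{n−1} T^{−i} ξ) ≤ (1/ℓ) H_{ν_n}(⋁_{i=0}^{ℓ−1} T^{−i} ξ) + (2ℓ/n) log M, where ν_n = (1/n) Σ_{i=0}^{n−1} ν ∘ T^{−i}. -/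
open MeasureTheory
open scoped ENNReal

/-- The dynamical join `⋁_{i=0}^{n−1} T^{−i} ξ` of the partition given by the fibers of
`P : X → ι`, encoded as the fibers of the itinerary map `x ↦ (P x, P(Tx), …, P(T^{n−1}x))`. -/
def dynJoin {X ι : Type*} (T : X → X) (P : X → ι) (n : ℕ) : X → (Fin n → ι) :=
  fun x j => P (T^[(j : ℕ)] x)

open Real Finset

/-!
Write `ξ^k = ⋁_{i<k} T^{-i} ξ`. Entropy is subadditive under joins (Gibbs' inequality) and
concave in the measure (Jensen for `x ↦ -x log x`). Fix a residue `j < ℓ`: the windows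
`[a, a + ℓ)` with `a < n`, `a ≡ j [MOD ℓ]`, together with `[0, ℓ)`, cover `[0, n)`, so
`H_ν(ξ^n) ≤ ℓ log M + ∑_{a ≡ j} H_{ν ∘ T^{-a}}(ξ^ℓ)`. Summing over the `ℓ` residues gives
`ℓ H_ν(ξ^n) ≤ ℓ² log M + ∑_{a<n} H_{ν ∘ T^{-a}}(ξ^ℓ) ≤ ℓ² log M + n H_{ν_n}(ξ^ℓ)`, by concavity.
-/

section Entropy

variable {X ι κ : Type*} [MeasurableSpace X]

lemma partEnt_eq_sum_s7 [Fintype ι] (μ : Measure X) (Q : X → ι) :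
    partEnt μ Q = ∑ i, negMulLog (μ.real (Q ⁻¹' {i})) :=
  tsum_fintype _

lemma partEnt_nonneg (μ : Measure X) [IsProbabilityMeasure μ] (Q : X → ι) :
    0 ≤ partEnt μ Q :=
  tsum_nonneg fun _ => negMulLog_nonneg measureReal_nonneg measureReal_le_one

lemma partEnt_map {Y : Type*} [MeasurableSpace Y] [MeasurableSpace ι] [MeasurableSingletonClass ι]
    (μ : Measure X) {f : X → Y} (hf : Measurable f) {Q : Y → ι} (hQ : Measurable Q) :
    partEnt (μ.map f) Q = partEnt μ (Q ∘ f) := by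
  simp only [partEnt, Measure.map_apply hf (hQ (measurableSet_singleton _)), Set.preimage_comp]

lemma sum_measureReal_preimage_singleton [Fintype ι] [MeasurableSpace ι]
    [MeasurableSingletonClass ι] (μ : Measure X) [IsFiniteMeasure μ] {Q : X → ι}
    (hQ : Measurable Q) :
    ∑ i, μ.real (Q ⁻¹' {i}) = μ.real Set.univ := by
  simp only [measureReal_def]
  rw [← ENNReal.toReal_sum fun _ _ => measure_ne_top μ _,
    sum_measure_preimage_singleton _ fun i _ => hQ (measurableSet_singleton i)]
  simp

lemma negMulLog_sum_le (s : Finset κ) {p : κ → ℝ} (hp : ∀ k ∈ s, 0 ≤ p k) :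
    negMulLog (∑ k ∈ s, p k) ≤ ∑ k ∈ s, negMulLog (p k) := by
  simp only [negMulLog, neg_mul, sum_mul, ← sum_neg_distrib]
  refine sum_le_sum fun k hk => neg_le_neg ?_
  rcases (hp k hk).eq_or_lt with h | h
  · simp [← h]
  exact mul_le_mul_of_nonneg_left (log_le_log h (single_le_sum hp hk)) h.le

lemma negMulLog_le_sub_sub_mul_log {r a : ℝ} (hr : 0 ≤ r) (ha : 0 < a) :
    negMulLog r ≤ a - r - r * log a := by
  rcases hr.eq_or_lt with rfl | hr
  · simpa using ha.le
  have h := log_le_sub_one_of_pos (div_pos ha hr)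
  rw [log_div ha.ne' hr.ne'] at h
  have h' := mul_le_mul_of_nonneg_left h hr.le
  have hra : r * (a / r - 1) = a - r := by field_simp
  simp only [negMulLog]
  nlinarith

lemma partEnt_le_log_card [Fintype ι] [MeasurableSpace ι] [MeasurableSingletonClass ι]
    (μ : Measure X) [IsProbabilityMeasure μ] {Q : X → ι} (hQ : Measurable Q) :
    partEnt μ Q ≤ log (Fintype.card ι) := by
  have : Nonempty X := nonempty_of_isProbabilityMeasure μ
  have : Nonempty ι := ⟨Q (Classical.arbitrary X)⟩
  have hc : (0 : ℝ) < Fintype.card ι := by exact_mod_cast Fintype.card_pos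
  have hsum := sum_measureReal_preimage_singleton μ hQ
  calc partEnt μ Q
      ≤ ∑ i, ((Fintype.card ι : ℝ)⁻¹ - μ.real (Q ⁻¹' {i})
          - μ.real (Q ⁻¹' {i}) * log (Fintype.card ι : ℝ)⁻¹) := by
        rw [partEnt_eq_sum_s7]
        exact sum_le_sum fun i _ =>
          negMulLog_le_sub_sub_mul_log measureReal_nonneg (inv_pos.mpr hc)
    _ = log (Fintype.card ι) := by
        simp only [sum_sub_distrib, ← sum_mul, hsum, log_inv, sum_const, card_univ, nsmul_eq_mul]
        simp [hc.ne']

lemma partEnt_comp_le [Fintype ι] [Fintype κ] [MeasurableSpace κ] [MeasurableSingletonClass κ]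
    (μ : Measure X) [IsFiniteMeasure μ] (g : κ → ι) {R : X → κ} (hR : Measurable R) :
    partEnt μ (g ∘ R) ≤ partEnt μ R := by
  classical
  have hfiber : ∀ i, μ.real ((g ∘ R) ⁻¹' {i})
      = ∑ k with g k = i, μ.real (R ⁻¹' {k}) := by
    intro i
    simp only [measureReal_def]
    rw [← ENNReal.toReal_sum fun _ _ => measure_ne_top μ _,
      sum_measure_preimage_singleton _ fun k _ => hR (measurableSet_singleton k)]
    congr 2
    ext x
    simp
  rw [partEnt_eq_sum_s7, partEnt_eq_sum_s7, ← sum_fiberwise univ g]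
  exact sum_le_sum fun i _ => (hfiber i).symm ▸
    negMulLog_sum_le _ fun _ _ => measureReal_nonneg

lemma partEnt_prod_le [Fintype ι] [MeasurableSpace ι] [MeasurableSingletonClass ι]
    [Fintype κ] [MeasurableSpace κ] [MeasurableSingletonClass κ]
    (μ : Measure X) [IsProbabilityMeasure μ] {Q : X → ι} {R : X → κ}
    (hQ : Measurable Q) (hR : Measurable R) :
    partEnt μ (fun x => (Q x, R x)) ≤ partEnt μ Q + partEnt μ R := by
  set p : ι → ℝ := fun i => μ.real (Q ⁻¹' {i})
  set q : κ → ℝ := fun k => μ.real (R ⁻¹' {k})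
  set r : ι → κ → ℝ := fun i k => μ.real (Q ⁻¹' {i} ∩ R ⁻¹' {k})
  have hrow : ∀ i, ∑ k, r i k = p i := fun i => by
    simpa [r, p, measureReal_restrict_apply (hR (measurableSet_singleton _)), Set.inter_comm]
      using sum_measureReal_preimage_singleton (μ.restrict (Q ⁻¹' {i})) hR
  have hcol : ∀ k, ∑ i, r i k = q k := fun k => by
    simpa [r, q, measureReal_restrict_apply (hQ (measurableSet_singleton _))]
      using sum_measureReal_preimage_singleton (μ.restrict (R ⁻¹' {k})) hQ
  have hp : ∑ i, p i = 1 := by simpa using sum_measureReal_preimage_singleton μ hQ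
  have hq : ∑ k, q k = 1 := by simpa using sum_measureReal_preimage_singleton μ hR
  -- Gibbs' inequality against the product weights `p i * q k`.
  have hterm : ∀ i k, negMulLog (r i k)
      ≤ p i * q k - r i k - (r i k * log (p i) + r i k * log (q k)) := by
    intro i k
    have hr : 0 ≤ r i k := measureReal_nonneg
    rcases hr.eq_or_lt with h | h
    · have : 0 ≤ p i * q k := mul_nonneg measureReal_nonneg measureReal_nonneg
      rw [← h, negMulLog_zero]
      linarith
    have hpi : 0 < p i := h.trans_le (measureReal_mono Set.inter_subset_left)
    have hqk : 0 < q k := h.trans_le (measureReal_mono Set.inter_subset_right)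
    simpa [log_mul hpi.ne' hqk.ne', mul_add] using
      negMulLog_le_sub_sub_mul_log h.le (mul_pos hpi hqk)
  calc partEnt μ (fun x => (Q x, R x)) = ∑ i, ∑ k, negMulLog (r i k) := by
        rw [partEnt_eq_sum_s7, Fintype.sum_prod_type]
        simp [← Set.singleton_prod_singleton, Set.mk_preimage_prod, r]
    _ ≤ ∑ i, ∑ k, (p i * q k - r i k - (r i k * log (p i) + r i k * log (q k))) :=
        sum_le_sum fun i _ => sum_le_sum fun k _ => hterm i k
    _ = partEnt μ Q + partEnt μ R := by
        simp only [sum_sub_distrib, sum_add_distrib, ← mul_sum, ← sum_mul, hrow, hp, hq]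
        rw [sum_comm (f := fun i k => r i k * log (q k))]
        simp only [← sum_mul, hcol]
        rw [partEnt_eq_sum_s7, partEnt_eq_sum_s7]
        simp only [negMulLog, neg_mul, sum_neg_distrib]
        ring

lemma sum_partEnt_le_card_mul_partEnt_smul_sum [Fintype ι] {γ : Type*} {t : Finset γ}
    (ht : t.Nonempty) (μ : γ → Measure X) [∀ s, IsFiniteMeasure (μ s)] (Q : X → ι) :
    ∑ s ∈ t, partEnt (μ s) Q ≤ #t * partEnt ((#t : ℝ≥0∞)⁻¹ • ∑ s ∈ t, μ s) Q := by
  have hc : (0 : ℝ) < #t := by exact_mod_cast ht.card_pos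
  simp only [partEnt_eq_sum_s7, mul_sum]
  rw [sum_comm]
  refine sum_le_sum fun i _ => ?_
  have hJ := concaveOn_negMulLog.le_map_sum (t := t) (w := fun _ => (#t : ℝ)⁻¹)
    (p := fun s => (μ s).real (Q ⁻¹' {i})) (fun _ _ => by positivity)
    (by simp [hc.ne']) (fun _ _ => measureReal_nonneg)
  have havg : ((#t : ℝ≥0∞)⁻¹ • ∑ s ∈ t, μ s).real (Q ⁻¹' {i})
      = ∑ s ∈ t, (#t : ℝ)⁻¹ • (μ s).real (Q ⁻¹' {i}) := by
    rw [measureReal_def, Measure.smul_apply, Measure.finsetSum_apply, smul_eq_mul,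
      ENNReal.toReal_mul, ENNReal.toReal_sum fun s _ => measure_ne_top _ _, mul_sum]
    simp [measureReal_def]
  rw [havg]
  calc ∑ s ∈ t, negMulLog ((μ s).real (Q ⁻¹' {i}))
      = #t * ∑ s ∈ t, (#t : ℝ)⁻¹ • negMulLog ((μ s).real (Q ⁻¹' {i})) := by
        simp [← mul_sum, hc.ne']
    _ ≤ _ := mul_le_mul_of_nonneg_left hJ hc.le

end Entropy

/-- The join `⋁_k T^{-τ k} ξ`, where `ξ` is the partition into fibres of `P`; `dynJoin T P n` is
the case `τ = Fin.val`. -/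
def itinerary {X ι κ : Type*} (T : X → X) (P : X → ι) (τ : κ → ℕ) : X → κ → ι :=
  fun x k => P (T^[τ k] x)

lemma measurable_itinerary {X ι κ : Type*} [MeasurableSpace X] [MeasurableSpace ι] {T : X → X}
    {P : X → ι} (hT : Measurable T) (hP : Measurable P) (τ : κ → ℕ) :
    Measurable (itinerary T P τ) :=
  measurable_pi_lambda _ fun k => hP.comp (hT.iterate (τ k))

lemma partEnt_itinerary_add {X ι κ : Type*} [MeasurableSpace X] [MeasurableSpace ι]
    [MeasurableSingletonClass ι] [Countable κ] {T : X → X} {P : X → ι} (ν : Measure X)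
    (hT : Measurable T) (hP : Measurable P) (τ : κ → ℕ) (a : ℕ) :
    partEnt ν (itinerary T P fun k => τ k + a) = partEnt (ν.map T^[a]) (itinerary T P τ) := by
  rw [partEnt_map ν (hT.iterate a) (measurable_itinerary hT hP τ)]
  congr 1
  funext x k
  simp [itinerary, Function.iterate_add_apply]

section Itinerary

variable {X ι κ η : Type*} [MeasurableSpace X] [Fintype ι] [MeasurableSpace ι]
  [MeasurableSingletonClass ι] {T : X → X} {P : X → ι} (ν : Measure X) [IsProbabilityMeasure ν]

lemma partEnt_itinerary_mono [Fintype κ] [Fintype η] (hT : Measurable T) (hP : Measurable P)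
    {σ : η → ℕ} {τ : κ → ℕ} (h : Set.range σ ⊆ Set.range τ) :
    partEnt ν (itinerary T P σ) ≤ partEnt ν (itinerary T P τ) := by
  classical
  choose c hc using fun l => h ⟨l, rfl⟩
  have : itinerary T P σ = (fun w l => w (c l)) ∘ itinerary T P τ := by
    funext x l
    simp [itinerary, hc]
  rw [this]
  exact partEnt_comp_le ν _ (measurable_itinerary hT hP τ)

lemma partEnt_itinerary_sumElim_le [Fintype κ] [Fintype η] (hT : Measurable T)
    (hP : Measurable P) (σ : η → ℕ) (τ : κ → ℕ) :
    partEnt ν (itinerary T P (Sum.elim σ τ))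
      ≤ partEnt ν (itinerary T P σ) + partEnt ν (itinerary T P τ) := by
  classical
  have : itinerary T P (Sum.elim σ τ)
      = (fun vw => Sum.elim vw.1 vw.2) ∘ fun x => (itinerary T P σ x, itinerary T P τ x) := by
    funext x k
    cases k <;> rfl
  rw [this]
  exact (partEnt_comp_le ν _ ((measurable_itinerary hT hP σ).prodMk
    (measurable_itinerary hT hP τ))).trans
    (partEnt_prod_le ν (measurable_itinerary hT hP σ) (measurable_itinerary hT hP τ))

lemma partEnt_itinerary_prod_le {γ : Type*} [Fintype κ] (hT : Measurable T) (hP : Measurable P)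
    (s : Finset γ) (τ : γ → κ → ℕ) :
    partEnt ν (itinerary T P fun p : s × κ => τ p.1 p.2)
      ≤ ∑ a ∈ s, partEnt ν (itinerary T P (τ a)) := by
  classical
  induction s using Finset.induction_on with
  | empty =>
    simpa using partEnt_le_log_card ν
      (measurable_itinerary hT hP fun p : (∅ : Finset γ) × κ => τ p.1 p.2)
  | insert a s ha ih =>
    rw [sum_insert ha]
    refine (partEnt_itinerary_mono ν hT hP (τ := Sum.elim (τ a) fun p : s × κ => τ p.1 p.2)
      ?_).trans ((partEnt_itinerary_sumElim_le ν hT hP _ _).trans (add_le_add le_rfl ih))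
    rintro _ ⟨⟨⟨b, hb⟩, k⟩, rfl⟩
    rcases mem_insert.mp hb with rfl | hb
    · exact ⟨Sum.inl k, rfl⟩
    · exact ⟨Sum.inr (⟨b, hb⟩, k), rfl⟩

end Itinerary

section Dynamics

variable {X ι : Type*} [MeasurableSpace X] [Fintype ι] [MeasurableSpace ι]
  [MeasurableSingletonClass ι] {T : X → X} {P : X → ι} (ν : Measure X) [IsProbabilityMeasure ν]

lemma partEnt_dynJoin_le_log_card (hT : Measurable T) (hP : Measurable P) (ℓ : ℕ) :
    partEnt ν (dynJoin T P ℓ) ≤ ℓ * log (Fintype.card ι) := by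
  classical
  have h := partEnt_le_log_card ν (measurable_itinerary hT hP (Fin.val : Fin ℓ → ℕ))
  rwa [Fintype.card_fun, Fintype.card_fin, Nat.cast_pow, log_pow] at h

lemma partEnt_dynJoin_le_of_residue (hT : Measurable T) (hP : Measurable P) (n : ℕ) {ℓ j : ℕ}
    (hj : j < ℓ) :
    partEnt ν (dynJoin T P n) ≤ ℓ * log (Fintype.card ι)
      + ∑ a ∈ range n with a % ℓ = j, partEnt (ν.map T^[a]) (dynJoin T P ℓ) := by
  set B := {a ∈ range n | a % ℓ = j}
  -- The windows `[a, a + ℓ)`, `a ∈ B`, cover `[j, n)`; the window at `0` covers `[0, j)`.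
  have hcover : Set.range (Fin.val : Fin n → ℕ)
      ⊆ Set.range fun p : (insert 0 B : Finset ℕ) × Fin ℓ => (p.2 : ℕ) + p.1 := by
    rintro _ ⟨i, rfl⟩
    by_cases hi : (i : ℕ) < ℓ
    · exact ⟨(⟨0, mem_insert_self _ _⟩, ⟨i, hi⟩), rfl⟩
    have hd := Nat.div_add_mod ((i : ℕ) - j) ℓ
    have hm := Nat.mod_lt ((i : ℕ) - j) (by omega : 0 < ℓ)
    set a := j + ℓ * (((i : ℕ) - j) / ℓ) with ha
    have haB : a ∈ B := by
      simp only [B, a, mem_filter, mem_range, Nat.add_mul_mod_self_left, Nat.mod_eq_of_lt hj,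
        and_true]
      omega
    exact ⟨(⟨a, mem_insert_of_mem haB⟩, ⟨i - a, by omega⟩), by simp only; omega⟩
  calc partEnt ν (dynJoin T P n)
      ≤ ∑ a ∈ insert 0 B, partEnt ν (itinerary T P fun r : Fin ℓ => (r : ℕ) + a) :=
        (partEnt_itinerary_mono ν hT hP hcover).trans
          (partEnt_itinerary_prod_le ν hT hP (insert 0 B) fun a (r : Fin ℓ) => (r : ℕ) + a)
    _ = ∑ a ∈ insert 0 B, partEnt (ν.map T^[a]) (dynJoin T P ℓ) :=
        sum_congr rfl fun a _ => partEnt_itinerary_add ν hT hP (Fin.val : Fin ℓ → ℕ) a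
    _ ≤ partEnt ν (dynJoin T P ℓ) + ∑ a ∈ B, partEnt (ν.map T^[a]) (dynJoin T P ℓ) := by
        by_cases h0 : 0 ∈ B
        · rw [insert_eq_of_mem h0]
          exact le_add_of_nonneg_left (partEnt_nonneg _ _)
        · simp [sum_insert h0]
    _ ≤ _ := by grw [partEnt_dynJoin_le_log_card ν hT hP ℓ]

lemma mul_partEnt_dynJoin_le (hT : Measurable T) (hP : Measurable P) (n : ℕ) {ℓ : ℕ}
    (hℓ : 0 < ℓ) :
    ℓ * partEnt ν (dynJoin T P n) ≤ ℓ * (ℓ * log (Fintype.card ι))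
      + ∑ a ∈ range n, partEnt (ν.map T^[a]) (dynJoin T P ℓ) :=
  calc ℓ * partEnt ν (dynJoin T P n) = ∑ j ∈ range ℓ, partEnt ν (dynJoin T P n) := by simp
    _ ≤ ∑ j ∈ range ℓ, (ℓ * log (Fintype.card ι)
          + ∑ a ∈ range n with a % ℓ = j, partEnt (ν.map T^[a]) (dynJoin T P ℓ)) :=
        sum_le_sum fun j hj => partEnt_dynJoin_le_of_residue ν hT hP n (mem_range.mp hj)
    _ = _ := by
        rw [sum_add_distrib, sum_fiberwise_of_maps_to fun a _ => mem_range.2 (Nat.mod_lt a hℓ)]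
        simp

end Dynamics

theorem stmt7_general {X : Type*} [MetricSpace X] [MeasurableSpace X] [BorelSpace X]
    (T : X → X) (hT : Continuous T)
    (ν : Measure X) [IsProbabilityMeasure ν]
    (M : ℕ) (P : X → Fin M) (hP : ∀ i, MeasurableSet (P ⁻¹' {i}))
    (n ℓ : ℕ) (hℓ : 1 ≤ ℓ) :
    (1 / (n : ℝ)) * partEnt ν (dynJoin T P n) ≤
      (1 / (ℓ : ℝ)) * partEnt (avgMeasure ν T 0 n) (dynJoin T P ℓ)
        + (2 * ℓ / (n : ℝ)) * Real.log M := by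
  rcases Nat.eq_zero_or_pos n with rfl | hn
  · simp [avgMeasure, partEnt]
  have hblocks := mul_partEnt_dynJoin_le ν hT.measurable (measurable_to_countable' hP) n hℓ
  have hconcave : ∑ a ∈ range n, partEnt (ν.map T^[a]) (dynJoin T P ℓ)
      ≤ n * partEnt (avgMeasure ν T 0 n) (dynJoin T P ℓ) := by
    simpa [avgMeasure] using sum_partEnt_le_card_mul_partEnt_smul_sum
      (nonempty_range_iff.mpr hn.ne') (fun a => ν.map T^[a]) (dynJoin T P ℓ)
  rw [Fintype.card_fin] at hblocks
  have hℓ' : (0 : ℝ) < ℓ := by exact_mod_cast hℓ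
  have hn' : (0 : ℝ) < n := by exact_mod_cast hn
  calc (1 / (n : ℝ)) * partEnt ν (dynJoin T P n)
      = ℓ * partEnt ν (dynJoin T P n) / (ℓ * n) := by field_simp
    _ ≤ (n * partEnt (avgMeasure ν T 0 n) (dynJoin T P ℓ) + ℓ * (ℓ * log M)) / (ℓ * n) := by
        gcongr
        linarith
    _ = (1 / (ℓ : ℝ)) * partEnt (avgMeasure ν T 0 n) (dynJoin T P ℓ) + (ℓ / n) * log M := by
        field_simp
    _ ≤ _ := by
        have := log_natCast_nonneg M
        gcongr
        linarith

/-- Lemma 5.3 (Lemma 2.4 of [CFH08]): for a Borel probability measure `ν` on a compact metric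
space `X`, a continuous `T`, and a Borel partition `ξ` with at most `M` atoms (fibers of
`P : X → Fin M`), for positive integers `n ≥ 2ℓ`:
`(1/n) H_ν(⋁_{i<n} T^{−i}ξ) ≤ (1/ℓ) H_{ν_n}(⋁_{i<ℓ} T^{−i}ξ) + (2ℓ/n) log M`,
where `ν_n = (1/n) Σ_{i<n} ν ∘ T^{−i}`. -/
theorem stmt7 {X : Type*} [MetricSpace X] [CompactSpace X] [MeasurableSpace X] [BorelSpace X]
    (T : X → X) (hT : Continuous T)
    (ν : Measure X) [IsProbabilityMeasure ν]
    (M : ℕ) (P : X → Fin M) (hP : ∀ i, MeasurableSet (P ⁻¹' {i}))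
    (n ℓ : ℕ) (hℓ : 1 ≤ ℓ) (hn : 2 * ℓ ≤ n) :
    (1 / (n : ℝ)) * partEnt ν (dynJoin T P n) ≤
      (1 / (ℓ : ℝ)) * partEnt (avgMeasure ν T 0 n) (dynJoin T P ℓ)
        + (2 * ℓ / (n : ℝ)) * Real.log M :=
  stmt7_general T hT ν M P hP n ℓ hℓ
end
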